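/- arXiv:1704.04926 — 7 statements merged into one kernel-verified Lean document; each statement's English description precedes it below -/
import Mathlib

section
/- Let I ≥ 2 and H ≥ 2. Consider three-way I×I×H tables of nonnegative integers, and call two such tables u, v equivalent if: (i) Σ_{i,j} u(i,j,h) = Σ_{i,j} v(i,j,h) for every layer h; and (ii) the layer-summed tables U(i,j) = Σ_h u(i,j,h) and V(i,j) = Σ_h v(i,j,h) have equal row sums, equal column sums, and equal diagonal entries U(i,i) = V(i,i). Let ℳ_0 = 𝓑_1 ∪ 𝓑_2, where 𝓑_1 consists of all tables obtained from a df 1 loop m of degree 2 or 3 with support off the main diagonal by distributing its nonzero entries over the layers in such a way that each row of m is placed entirely in one layer, and 𝓑_2 consists of all tables b that are zero except for b(i_1,j_1,h_1)=1, b(i_2,j_2,h_1)=−1, b(i_1,j_1,h_2)=−1, b(i_2,j_2,h_2)=1 for cells (i_1,j_1) ≠ (i_2,j_2) and layers h_1 ≠ h_2, together with the negatives of all these tables. Then any two equivalent tables u, v are connected by a finite sequence u = f_0, f_1, …, f_L = v in which every f_s is a nonnegative integer table and every difference f_{s+1} − f_s belongs to ℳ_0; that is, ℳ_0 is a Markov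 basis for the model M_0 built on the quasi-independence model. -/
/-- `m` is a loop of degree `r` on the `I × I` table: there are pairwise distinct row
indices `a 0, …, a (r-1)` and pairwise distinct column indices `b 0, …, b (r-1)` with
`m (a s, b s) = 1`, `m (a s, b (s+1)) = -1` (indices mod `r`), and all other entries `0`. -/
def IsLoopOn (I r : ℕ) (m : Fin I × Fin I → ℤ) : Prop :=
  2 ≤ r ∧ ∃ a b : Fin r → Fin I, Function.Injective a ∧ Function.Injective b ∧
    (∀ s, m (a s, b s) = 1) ∧
    (∀ s, m (a s, b (finRotate r s)) = -1) ∧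
    (∀ p : Fin I × Fin I,
      (∀ s, ¬(a s = p.1 ∧ b s = p.2) ∧ ¬(a s = p.1 ∧ b (finRotate r s) = p.2)) → m p = 0)

/-- A loop is df 1 if its support does not contain the support of any other loop. -/
def IsDf1Loop (I : ℕ) (m : Fin I × Fin I → ℤ) : Prop :=
  (∃ r, IsLoopOn I r m) ∧
  ∀ m' : Fin I × Fin I → ℤ, (∃ r', IsLoopOn I r' m') →
    {p | m' p ≠ 0} ⊆ {p | m p ≠ 0} → m' = m ∨ m' = -m

/-- Moves of type 1 for the model `M_0`: a df 1 loop `m` of degree 2 or 3 with support off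
the main diagonal, split over the layers so that each row of `m` lies entirely in one layer. -/
def B1qi (I H : ℕ) : Set (Fin I × Fin I × Fin H → ℤ) :=
  {b | ∃ (m : Fin I × Fin I → ℤ) (ℓ : Fin I → Fin H),
    IsDf1Loop I m ∧ (IsLoopOn I 2 m ∨ IsLoopOn I 3 m) ∧
    (∀ i, m (i, i) = 0) ∧
    b = fun p => if p.2.2 = ℓ p.1 then m (p.1, p.2.1) else 0}

/-- A basic move of type 2: `+1` at `(c₁,h₁)` and `(c₂,h₂)`, `-1` at `(c₂,h₁)` and `(c₁,h₂)`. -/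
def Bmove (I H : ℕ) (c₁ c₂ : Fin I × Fin I) (h₁ h₂ : Fin H) :
    Fin I × Fin I × Fin H → ℤ := fun p =>
  (if p = (c₁.1, c₁.2, h₁) then 1 else 0) + (if p = (c₂.1, c₂.2, h₁) then -1 else 0) +
    (if p = (c₁.1, c₁.2, h₂) then -1 else 0) + (if p = (c₂.1, c₂.2, h₂) then 1 else 0)

/-- Moves of type 2 for the model `M_0`, together with their negatives. -/
def B2 (I H : ℕ) : Set (Fin I × Fin I × Fin H → ℤ) :=
  {b | ∃ (c₁ c₂ : Fin I × Fin I) (h₁ h₂ : Fin H), c₁ ≠ c₂ ∧ h₁ ≠ h₂ ∧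
    (b = Bmove I H c₁ c₂ h₁ h₂ ∨ b = -(Bmove I H c₁ c₂ h₁ h₂))}

/-- `f` and `g` are connected through nonnegative tables by steps in `M`. -/
def MarkovConnects {α : Type*} (M : Set (α → ℤ)) (f g : α → ℤ) : Prop :=
  ∃ (L : ℕ) (path : Fin (L + 1) → α → ℤ),
    path 0 = f ∧ path (Fin.last L) = g ∧
    (∀ s p, 0 ≤ path s p) ∧
    ∀ s : Fin L, path s.succ - path s.castSucc ∈ M

/-
Let `U`, `V` be the layer-summed tables of `u`, `v`. While `U ≠ V`, the difference `U - V` has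
zero row sums, column sums and diagonal, and a short alternating search in it finds a loop of
degree 2 or 3 off the diagonal which, placed row by row into layers where `u` has the entries it
removes, lowers `∑ |U - V|`. Such a loop is df 1: any loop supported inside it has zero margins,
hence is an integer multiple of it. Once `U = V`, `u - v` has zero margins as a two-way
(cells × layers) table, and a basic move of type 2 lowers `∑ |u - v|` without changing `U`. So
the pair `(∑ |U - V|, ∑ |u - v|)` decreases lexicographically along a path from `u` to `v`.
-/

open Finset

section Connectivity

variable {α : Type*} {M : Set (α → ℤ)}

theorem MarkovConnects.refl {f : α → ℤ} (hf : ∀ p, 0 ≤ f p) : MarkovConnects M f f :=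
  ⟨0, fun _ => f, rfl, rfl, fun _ => hf, fun s => s.elim0⟩

theorem MarkovConnects.cons {f g w : α → ℤ} (hf : ∀ p, 0 ≤ f p) (hfg : g - f ∈ M)
    (h : MarkovConnects M g w) : MarkovConnects M f w := by
  obtain ⟨L, path, h0, hL, hpos, hstep⟩ := h
  refine ⟨L + 1, Fin.cons f path, rfl, by simpa [← Fin.succ_last] using hL, ?_, ?_⟩
  · intro s p
    cases s using Fin.cases with
    | zero => exact hf p
    | succ s => exact hpos s p
  · intro s
    cases s using Fin.cases with
    | zero => simpa [h0] using hfg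
    | succ s => simpa [← Fin.succ_castSucc] using hstep s

theorem markovConnects_of_descent {β : Type*} {r : β → β → Prop} (hr : WellFounded r)
    (μ : (α → ℤ) → β) (P : (α → ℤ) → Prop) {v : α → ℤ}
    (hstep : ∀ u, (∀ p, 0 ≤ u p) → P u → u ≠ v →
      ∃ m ∈ M, (∀ p, 0 ≤ u p + m p) ∧ P (u + m) ∧ r (μ (u + m)) (μ u)) :
    ∀ u, (∀ p, 0 ≤ u p) → P u → MarkovConnects M u v := by
  intro u
  induction u using (InvImage.wf μ hr).induction with
  | h u ih =>
    intro hu hP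
    by_cases huv : u = v
    · exact huv ▸ MarkovConnects.refl hu
    obtain ⟨m, hm, hnn, hP', hlt⟩ := hstep u hu hP huv
    exact MarkovConnects.cons hu (by simpa using hm) (ih _ hlt hnn hP')

end Connectivity

theorem sum_natAbs_add_lt_of_mul_neg {ι : Type*} [Fintype ι] [DecidableEq ι] {d m : ι → ℤ}
    {c₀ c₁ c₂ : ι} (h₁₂ : c₁ ≠ c₂) (hm : ∀ i, |m i| ≤ 1)
    (hgood : ∀ i, i ≠ c₀ → m i ≠ 0 → m i * d i < 0) (h₁ : m c₁ * d c₁ < 0)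
    (h₂ : m c₂ * d c₂ < 0) :
    ∑ i, (d i + m i).natAbs < ∑ i, (d i).natAbs := by
  have key : ∀ i, m i * d i < 0 → (d i + m i).natAbs + 1 ≤ (d i).natAbs := fun i hi => by
    obtain ⟨hlo, hhi⟩ := abs_le.mp (hm i)
    rcases (by omega : m i = -1 ∨ m i = 0 ∨ m i = 1) with h | h | h <;> rw [h] at hi ⊢ <;> omega
  -- `|d + m|` drops by one at `c₁` and `c₂`, grows by at most one at `c₀`, and nowhere else
  have hcell : ∀ i, (d i + m i).natAbs + ((if i = c₁ then 1 else 0) + if i = c₂ then 1 else 0)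
      ≤ (d i).natAbs + if i = c₀ then 1 else 0 := by
    intro i
    rcases eq_or_ne i c₁ with rfl | hi₁
    · have := key i h₁
      rw [if_pos rfl, if_neg h₁₂]
      split_ifs <;> omega
    rcases eq_or_ne i c₂ with rfl | hi₂
    · have := key i h₂
      rw [if_pos rfl, if_neg hi₁]
      split_ifs <;> omega
    rw [if_neg hi₁, if_neg hi₂]
    by_cases hmi : m i = 0
    · simp [hmi]
    by_cases hi₀ : i = c₀
    · have := abs_le.mp (hm i)
      rw [if_pos hi₀]
      omega
    · have := key i (hgood i hi₀ hmi)
      omega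
  have := sum_le_sum fun i (_ : i ∈ univ) => hcell i
  simp only [sum_add_distrib, sum_ite_eq', mem_univ, if_true] at this
  omega

theorem finRotate_ne_self {r : ℕ} (hr : 2 ≤ r) (s : Fin r) : finRotate r s ≠ s :=
  Equiv.Perm.mem_support.mp (by simp [support_finRotate_of_le hr])

theorem eq_of_apply_finRotate_eq {β : Type*} {r : ℕ} (hr : 2 ≤ r) {g : Fin r → β}
    (hg : ∀ s, g (finRotate r s) = g s) (s t : Fin r) : g s = g t := by
  have hpow : ∀ n s, g ((finRotate r ^ n) s) = g s := by
    intro n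
    induction n with
    | zero => simp
    | succ n ih => intro s; rw [pow_succ', Equiv.Perm.mul_apply, hg, ih]
  obtain ⟨n, hn⟩ := (isCycle_finRotate_of_le hr).exists_pow_eq
    (finRotate_ne_self hr t) (finRotate_ne_self hr s)
  rw [← hn, hpow]

section Loops

variable {ρ κ : Type*} [DecidableEq ρ] [DecidableEq κ] {r : ℕ} {a : Fin r → ρ} {b : Fin r → κ}

def loopOf (a : Fin r → ρ) (b : Fin r → κ) (p : ρ × κ) : ℤ :=
  ∑ s, ((if (a s, b s) = p then 1 else 0) - if (a s, b (finRotate r s)) = p then 1 else 0)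

theorem loopOf_ne_zero {x : ρ} {y : κ} (h : loopOf a b (x, y) ≠ 0) :
    ∃ s, a s = x ∧ (b s = y ∨ b (finRotate r s) = y) := by
  by_contra hxy
  simp only [not_exists, not_and, not_or] at hxy
  refine h (sum_eq_zero fun s _ => ?_)
  by_cases hx : a s = x
  · simp [Prod.ext_iff, hx, hxy s hx, -finRotate_apply]
  · simp [Prod.ext_iff, hx]

theorem loopOf_apply_row (ha : a.Injective) (s : Fin r) (y : κ) :
    loopOf a b (a s, y) = (if b s = y then 1 else 0) - if b (finRotate r s) = y then 1 else 0 := by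
  simp [loopOf, Prod.ext_iff, ha.eq_iff, ite_and, sum_sub_distrib, -finRotate_apply]

theorem loopOf_apply_pos (hr : 2 ≤ r) (ha : a.Injective) (hb : b.Injective) (s : Fin r) :
    loopOf a b (a s, b s) = 1 := by
  simp [loopOf_apply_row ha, hb.eq_iff, finRotate_ne_self hr, -finRotate_apply]

theorem loopOf_apply_neg (hr : 2 ≤ r) (ha : a.Injective) (hb : b.Injective) (s : Fin r) :
    loopOf a b (a s, b (finRotate r s)) = -1 := by
  simp [loopOf_apply_row ha, hb.eq_iff, (finRotate_ne_self hr s).symm, -finRotate_apply]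

theorem abs_loopOf_le (hr : 2 ≤ r) (ha : a.Injective) (hb : b.Injective) (p : ρ × κ) :
    |loopOf a b p| ≤ 1 := by
  obtain ⟨x, y⟩ := p
  by_cases hp : loopOf a b (x, y) = 0
  · simp [hp]
  obtain ⟨s, rfl, rfl | rfl⟩ := loopOf_ne_zero hp
  · simp [loopOf_apply_pos hr ha hb]
  · rw [loopOf_apply_neg hr ha hb]; simp

theorem exists_eq_of_loopOf_neg (hr : 2 ≤ r) (ha : a.Injective) (hb : b.Injective)
    {x : ρ} {y : κ} (hp : loopOf a b (x, y) < 0) : ∃ s, a s = x ∧ b (finRotate r s) = y := by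
  obtain ⟨s, rfl, rfl | hy⟩ := loopOf_ne_zero hp.ne
  · rw [loopOf_apply_pos hr ha hb] at hp
    omega
  · exact ⟨s, rfl, hy⟩

theorem sum_loopOf_row [Fintype κ] (x : ρ) : ∑ y, loopOf a b (x, y) = 0 := by
  simp only [loopOf]
  rw [sum_comm]
  refine sum_eq_zero fun s _ => ?_
  simp [Prod.ext_iff, sum_sub_distrib, ite_and]

theorem sum_loopOf_col [Fintype ρ] (y : κ) : ∑ x, loopOf a b (x, y) = 0 := by
  simp only [loopOf]
  rw [sum_comm]
  simp only [Prod.ext_iff, sum_sub_distrib, ite_and, Fintype.sum_ite_eq]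
  rw [Equiv.sum_comp (finRotate r) (fun s => if b s = y then (1 : ℤ) else 0), sub_self]

theorem loopOf_apply_self_eq_zero {a b : Fin r → ρ} (h₁ : ∀ s, a s ≠ b s)
    (h₂ : ∀ s, a s ≠ b (finRotate r s)) (x : ρ) : loopOf a b (x, x) = 0 := by
  by_contra h
  obtain ⟨s, rfl, h | h⟩ := loopOf_ne_zero h
  exacts [h₁ s h.symm, h₂ s h.symm]

end Loops

section Circuit

variable {ρ κ : Type*} [DecidableEq ρ] [DecidableEq κ] [Fintype ρ] [Fintype κ] {r : ℕ}
  {a : Fin r → ρ} {b : Fin r → κ}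

theorem exists_eq_smul_loopOf (hr : 2 ≤ r) (ha : a.Injective) (hb : b.Injective)
    {f : ρ × κ → ℤ} (hf : ∀ p, loopOf a b p = 0 → f p = 0)
    (hrow : ∀ x, ∑ y, f (x, y) = 0) (hcol : ∀ y, ∑ x, f (x, y) = 0) :
    ∃ t : ℤ, f = t • loopOf a b := by
  set σ := finRotate r
  have hsupp : ∀ x y, f (x, y) ≠ 0 → ∃ s, a s = x ∧ (b s = y ∨ b (σ s) = y) :=
    fun x y h => loopOf_ne_zero (mt (hf _) h)
  -- row `a s` and column `b (σ s)` each meet the support in two cells, so the zero margins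
  -- make `s ↦ f (a s, b s)` invariant under `σ`
  have hrow' : ∀ s, f (a s, b s) + f (a s, b (σ s)) = 0 := by
    intro s
    rw [← hrow (a s)]
    refine (Fintype.sum_eq_add (f := fun y => f (a s, y)) _ _
      (hb.ne (finRotate_ne_self hr s).symm) fun y hy => ?_).symm
    by_contra h
    obtain ⟨s', hs', hy'⟩ := hsupp _ _ h
    obtain rfl := ha hs'
    tauto
  have hcol' : ∀ s, f (a s, b (σ s)) + f (a (σ s), b (σ s)) = 0 := by
    intro s
    rw [← hcol (b (σ s))]
    refine (Fintype.sum_eq_add (f := fun x => f (x, b (σ s))) _ _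
      (ha.ne (finRotate_ne_self hr s).symm) fun x hx => ?_).symm
    by_contra h
    obtain ⟨s', rfl, hy' | hy'⟩ := hsupp _ _ h
    · exact hx.2 (by rw [hb hy'])
    · exact hx.1 (by rw [σ.injective (hb hy')])
  have hconst : ∀ s t, f (a s, b s) = f (a t, b t) :=
    eq_of_apply_finRotate_eq hr fun s => by linarith [hrow' s, hcol' s]
  let s₀ : Fin r := ⟨0, by omega⟩
  refine ⟨f (a s₀, b s₀), funext fun ⟨x, y⟩ => ?_⟩
  by_cases h : loopOf a b (x, y) = 0
  · simp [h, hf _ h]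
  obtain ⟨s, rfl, rfl | rfl⟩ := loopOf_ne_zero h
  · simp [loopOf_apply_pos hr ha hb, hconst s s₀]
  · rw [Pi.smul_apply, loopOf_apply_neg hr ha hb, smul_eq_mul]
    linarith [hrow' s, hconst s s₀]

end Circuit

section QuasiIndependence

variable {I r : ℕ} {m : Fin I × Fin I → ℤ}

theorem isLoopOn_loopOf (hr : 2 ≤ r) {a b : Fin r → Fin I} (ha : a.Injective) (hb : b.Injective) :
    IsLoopOn I r (loopOf a b) := by
  refine ⟨hr, a, b, ha, hb, loopOf_apply_pos hr ha hb, loopOf_apply_neg hr ha hb,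
    fun ⟨x, y⟩ hp => ?_⟩
  by_contra h
  obtain ⟨s, rfl, hy | hy⟩ := loopOf_ne_zero h
  exacts [(hp s).1 ⟨rfl, hy⟩, (hp s).2 ⟨rfl, hy⟩]

theorem IsLoopOn.exists_eq_loopOf (hm : IsLoopOn I r m) :
    ∃ a b : Fin r → Fin I, a.Injective ∧ b.Injective ∧ m = loopOf a b := by
  obtain ⟨hr, a, b, ha, hb, hpos, hneg, hzero⟩ := hm
  refine ⟨a, b, ha, hb, funext fun ⟨x, y⟩ => ?_⟩
  by_cases hxy : ∃ s, a s = x ∧ (b s = y ∨ b (finRotate r s) = y)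
  · obtain ⟨s, rfl, rfl | rfl⟩ := hxy
    · rw [hpos, loopOf_apply_pos hr ha hb]
    · rw [hneg, loopOf_apply_neg hr ha hb]
  · rw [hzero (x, y) fun s => ⟨fun h => hxy ⟨s, h.1, .inl h.2⟩, fun h => hxy ⟨s, h.1, .inr h.2⟩⟩]
    by_contra h
    exact hxy (loopOf_ne_zero (Ne.symm h))

theorem IsLoopOn.isDf1Loop (hm : IsLoopOn I r m) : IsDf1Loop I m := by
  refine ⟨⟨r, hm⟩, fun m' ⟨r', hm'⟩ hsupp => ?_⟩
  obtain ⟨a, b, ha, hb, rfl⟩ := hm.exists_eq_loopOf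
  obtain ⟨a', b', ha', hb', rfl⟩ := hm'.exists_eq_loopOf
  obtain ⟨t, ht⟩ := exists_eq_smul_loopOf hm.1 ha hb
    (fun p hp => by_contra fun h => hsupp h hp) sum_loopOf_row sum_loopOf_col
  let s₀ : Fin r' := ⟨0, by have := hm'.1; omega⟩
  have h1 := congrFun ht (a' s₀, b' s₀)
  rw [loopOf_apply_pos hm'.1 ha' hb', Pi.smul_apply, smul_eq_mul] at h1
  rcases Int.eq_one_or_neg_one_of_mul_eq_one h1.symm with rfl | rfl
  · exact Or.inl (by simpa using ht)
  · exact Or.inr (by simpa using ht)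

end QuasiIndependence

section Reducing

variable {ρ κ : Type*} {r : ℕ} {a : Fin r → ρ} {b : Fin r → κ} {s₀ : Fin r} {d : ρ × κ → ℤ}

/-- Adding `loopOf a b` to a table whose excess over a target table is `d` lowers `|d|` at every
cell of the loop except possibly at `(a s₀, b s₀)`, where the loop adds `1`. -/
structure IsReducingLoop (d : ρ × κ → ℤ) (a : Fin r → ρ) (b : Fin r → κ) (s₀ : Fin r) :
    Prop where
  two_le : 2 ≤ r
  injective_fst : a.Injective
  injective_snd : b.Injective
  pos : ∀ s, 0 < d (a s, b (finRotate r s))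
  neg : ∀ s, s ≠ s₀ → d (a s, b s) < 0

namespace IsReducingLoop

variable [DecidableEq ρ] [DecidableEq κ]

theorem pos_of_loopOf_neg (h : IsReducingLoop d a b s₀) {p : ρ × κ} (hp : loopOf a b p < 0) :
    0 < d p := by
  obtain ⟨x, y⟩ := p
  obtain ⟨s, rfl, rfl⟩ := exists_eq_of_loopOf_neg h.two_le h.injective_fst h.injective_snd hp
  exact h.pos s

theorem add_loopOf_nonneg (h : IsReducingLoop d a b s₀) {w w' : ρ × κ → ℤ} (hd : d = w - w')
    (hw : ∀ p, 0 ≤ w p) (hw' : ∀ p, 0 ≤ w' p) (p : ρ × κ) : 0 ≤ w p + loopOf a b p := by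
  have := (abs_le.mp (abs_loopOf_le h.two_le h.injective_fst h.injective_snd p)).1
  by_cases hp : loopOf a b p < 0
  · have := h.pos_of_loopOf_neg hp
    rw [hd, Pi.sub_apply] at this
    linarith [hw' p]
  · linarith [hw p]

theorem sum_natAbs_add_lt [Fintype ρ] [Fintype κ] (h : IsReducingLoop d a b s₀) :
    ∑ p, (d p + loopOf a b p).natAbs < ∑ p, (d p).natAbs := by
  obtain ⟨hr, ha, hb, hpos, hneg⟩ := h
  set σ := finRotate r
  refine sum_natAbs_add_lt_of_mul_neg (c₀ := (a s₀, b s₀)) (c₁ := (a s₀, b (σ s₀)))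
    (c₂ := (a (σ s₀), b (σ (σ s₀)))) ?_ (abs_loopOf_le hr ha hb) ?_ ?_ ?_
  · exact fun e => finRotate_ne_self hr s₀ (ha (congrArg Prod.fst e)).symm
  · rintro ⟨x, y⟩ hc hxy
    obtain ⟨s, rfl, rfl | rfl⟩ := loopOf_ne_zero hxy
    · have hs : s ≠ s₀ := by rintro rfl; exact hc rfl
      rw [loopOf_apply_pos hr ha hb]
      linarith [hneg s hs]
    · rw [loopOf_apply_neg hr ha hb]
      linarith [hpos s]
  · rw [loopOf_apply_neg hr ha hb]
    linarith [hpos s₀]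
  · rw [loopOf_apply_neg hr ha hb]
    linarith [hpos (σ s₀)]

end IsReducingLoop

theorem isReducingLoop_two {x₀ x₁ : ρ} {y₀ y₁ : κ} (h₀₁ : 0 < d (x₀, y₁))
    (h₁₀ : 0 < d (x₁, y₀)) (h₀₀ : d (x₀, y₀) < 0) : IsReducingLoop d ![x₀, x₁] ![y₀, y₁] 1 := by
  have hx : x₀ ≠ x₁ := by rintro rfl; linarith
  have hy : y₀ ≠ y₁ := by rintro rfl; linarith
  refine ⟨le_rfl, ?_, ?_, ?_, ?_⟩
  · intro s t; fin_cases s <;> fin_cases t <;> simp [hx, hx.symm]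
  · intro s t; fin_cases s <;> fin_cases t <;> simp [hy, hy.symm]
  · intro s; fin_cases s <;> simpa
  · intro s hs; fin_cases s <;> simp_all

theorem isReducingLoop_three {x₀ x₁ x₂ : ρ} {y₀ y₁ y₂ : κ} (hx : x₁ ≠ x₂) (hy : y₀ ≠ y₂)
    (h₀₁ : 0 < d (x₀, y₁)) (h₁₂ : 0 < d (x₁, y₂)) (h₂₀ : 0 < d (x₂, y₀))
    (h₀₀ : d (x₀, y₀) < 0) (h₁₁ : d (x₁, y₁) < 0) :
    IsReducingLoop d ![x₀, x₁, x₂] ![y₀, y₁, y₂] 2 := by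
  have hx₀₁ : x₀ ≠ x₁ := by rintro rfl; linarith
  have hx₀₂ : x₀ ≠ x₂ := by rintro rfl; linarith
  have hy₀₁ : y₀ ≠ y₁ := by rintro rfl; linarith
  have hy₁₂ : y₁ ≠ y₂ := by rintro rfl; linarith
  refine ⟨by norm_num, ?_, ?_, ?_, ?_⟩
  · intro s t; fin_cases s <;> fin_cases t <;> simp [*, Ne.symm]
  · intro s t; fin_cases s <;> fin_cases t <;> simp [*, Ne.symm]
  · intro s; fin_cases s <;> simpa
  · intro s hs; fin_cases s <;> simp_all

end Reducing

theorem IsReducingLoop.loopOf_apply_self {ρ : Type*} [DecidableEq ρ] {r : ℕ} {a b : Fin r → ρ}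
    {s₀ : Fin r} {d : ρ × ρ → ℤ} (h : IsReducingLoop d a b s₀)
    (hdiag : ∀ x, d (x, x) = 0) (hs₀ : a s₀ ≠ b s₀) (x : ρ) : loopOf a b (x, x) = 0 := by
  refine loopOf_apply_self_eq_zero (fun s hs => ?_) (fun s hs => ?_) x
  · by_cases e : s = s₀
    · exact hs₀ (e ▸ hs)
    · have := h.neg s e
      rw [hs, hdiag] at this
      exact lt_irrefl _ this
  · have := h.pos s
    rw [hs, hdiag] at this
    exact lt_irrefl _ this

section Search

variable {ρ κ : Type*} [Fintype κ] {d : ρ × κ → ℤ}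

theorem exists_pos_of_sum_rows_eq_zero (hrow : ∀ x, ∑ y, d (x, y) = 0) (hd : d ≠ 0) : ∃ p, 0 < d p := by
  obtain ⟨⟨x, y⟩, hxy⟩ := Function.ne_iff.mp hd
  obtain ⟨y', -, hy'⟩ := exists_pos_of_sum_zero_of_exists_nonzero (fun y => d (x, y))
    (hrow x) ⟨y, mem_univ _, hxy⟩
  exact ⟨_, hy'⟩

theorem exists_neg_pos_of_pos [Fintype ρ] (hrow : ∀ x, ∑ y, d (x, y) = 0) (hcol : ∀ y, ∑ x, d (x, y) = 0)
    {x : ρ} {y : κ} (h : 0 < d (x, y)) : ∃ x' y', d (x, y') < 0 ∧ 0 < d (x', y') := by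
  obtain ⟨y', -, hy'⟩ := exists_pos_of_sum_zero_of_exists_nonzero (fun y => -d (x, y))
    (by simp [hrow x]) ⟨y, mem_univ _, by simp [h.ne']⟩
  obtain ⟨x', -, hx'⟩ := exists_pos_of_sum_zero_of_exists_nonzero (fun x => d (x, y'))
    (hcol y') ⟨x, mem_univ _, by simp at hy'; exact hy'.ne⟩
  exact ⟨x', y', by simpa using hy', hx'⟩

theorem exists_isReducingLoop_two [Fintype ρ] (hrow : ∀ x, ∑ y, d (x, y) = 0)
    (hcol : ∀ y, ∑ x, d (x, y) = 0) (hd : d ≠ 0) :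
    ∃ (a : Fin 2 → ρ) (b : Fin 2 → κ), IsReducingLoop d a b 1 := by
  obtain ⟨⟨x₀, y₁⟩, h₀₁⟩ := exists_pos_of_sum_rows_eq_zero hrow hd
  obtain ⟨x₁, y₂, h₀₂, h₁₂⟩ := exists_neg_pos_of_pos hrow hcol h₀₁
  exact ⟨_, _, isReducingLoop_two h₀₁ h₁₂ h₀₂⟩

end Search

/-- With a zero diagonal, the loop of degree 2 found above may have its free cell on the
diagonal; one more step of the search then closes a loop of degree 2 or 3 off the diagonal. -/
theorem exists_isReducingLoop_offDiag {I : ℕ} {d : Fin I × Fin I → ℤ}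
    (hrow : ∀ x, ∑ y, d (x, y) = 0) (hcol : ∀ y, ∑ x, d (x, y) = 0) (hdiag : ∀ x, d (x, x) = 0)
    (hd : d ≠ 0) :
    ∃ r ≤ 3, ∃ (a b : Fin r → Fin I) (s₀ : Fin r), IsReducingLoop d a b s₀ ∧ a s₀ ≠ b s₀ := by
  have hoff : ∀ {x y}, d (x, y) ≠ 0 → x ≠ y := by
    rintro x y h rfl
    exact h (hdiag x)
  obtain ⟨⟨x₀, y₁⟩, h₀₁⟩ := exists_pos_of_sum_rows_eq_zero hrow hd
  obtain ⟨x₁, y₂, h₀₂, h₁₂⟩ := exists_neg_pos_of_pos hrow hcol h₀₁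
  by_cases hx₁ : x₁ = y₁
  · subst hx₁
    obtain ⟨x₂, y₃, h₁₃, h₂₃⟩ := exists_neg_pos_of_pos hrow hcol h₁₂
    by_cases hx₂ : x₂ = x₀
    · rw [hx₂] at h₂₃
      exact ⟨2, by norm_num, _, _, _, isReducingLoop_two h₁₂ h₂₃ h₁₃, by simpa using hoff h₀₂.ne⟩
    · have hx₂₁ : x₂ ≠ x₁ := by rintro rfl; linarith
      exact ⟨3, le_rfl, _, _, _,
        isReducingLoop_three (Ne.symm hx₂) (hoff h₁₃.ne).symm h₁₂ h₀₁ h₂₃ h₁₃ h₀₂,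
        by simpa using hx₂₁⟩
  · exact ⟨2, by norm_num, _, _, _, isReducingLoop_two h₀₁ h₁₂ h₀₂, by simpa using hx₁⟩

section ThreeWay

variable {I H : ℕ}

def sumLayers : (Fin I × Fin I × Fin H → ℤ) →+ (Fin I × Fin I → ℤ) :=
  AddMonoidHom.mk' (fun u c => ∑ h, u (c.1, c.2, h)) fun u w => by
    ext; simp [sum_add_distrib]

def layerTotals : (Fin I × Fin I × Fin H → ℤ) →+ (Fin H → ℤ) :=
  AddMonoidHom.mk' (fun u h => ∑ i, ∑ j, u (i, j, h)) fun u w => by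
    ext; simp [sum_add_distrib]

/-- The sufficient statistic of the quasi-independence model with fixed diagonal. -/
def qiStat : (Fin I × Fin I → ℤ) →+ (Fin I → ℤ) × (Fin I → ℤ) × (Fin I → ℤ) :=
  AddMonoidHom.mk' (fun U => (fun i => ∑ j, U (i, j), fun j => ∑ i, U (i, j), fun i => U (i, i)))
    fun U V => by ext <;> simp [sum_add_distrib]

theorem qiStat_eq_zero_iff {U : Fin I × Fin I → ℤ} :
    qiStat U = 0 ↔ (∀ i, ∑ j, U (i, j) = 0) ∧ (∀ j, ∑ i, U (i, j) = 0) ∧ ∀ i, U (i, i) = 0 := by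
  simp [qiStat, Prod.ext_iff, funext_iff]

/-- A three-way table as a two-way table whose rows are the cells `(i, j)` and whose columns
are the layers. -/
def cellLayer (u : Fin I × Fin I × Fin H → ℤ) (q : (Fin I × Fin I) × Fin H) : ℤ :=
  u (q.1.1, q.1.2, q.2)

theorem sumLayers_apply (u : Fin I × Fin I × Fin H → ℤ) (c : Fin I × Fin I) :
    sumLayers u c = ∑ h, cellLayer u (c, h) :=
  rfl

theorem layerTotals_apply (u : Fin I × Fin I × Fin H → ℤ) (h : Fin H) :
    layerTotals u h = ∑ c, cellLayer u (c, h) := by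
  simp [layerTotals, cellLayer, Fintype.sum_prod_type]

def liftRows (ℓ : Fin I → Fin H) (m : Fin I × Fin I → ℤ) : Fin I × Fin I × Fin H → ℤ :=
  fun p => if p.2.2 = ℓ p.1 then m (p.1, p.2.1) else 0

theorem sumLayers_liftRows (ℓ : Fin I → Fin H) (m : Fin I × Fin I → ℤ) :
    sumLayers (liftRows ℓ m) = m := by
  ext c
  simp [sumLayers, liftRows]

theorem layerTotals_liftRows (ℓ : Fin I → Fin H) {m : Fin I × Fin I → ℤ}
    (hm : ∀ i, ∑ j, m (i, j) = 0) : layerTotals (liftRows ℓ m) = 0 := by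
  ext h
  refine (sum_eq_zero fun i _ => ?_ : ∑ i, ∑ j, liftRows ℓ m (i, j, h) = 0)
  by_cases hi : h = ℓ i <;> simp [liftRows, hi, hm]

theorem cellLayer_Bmove (a : Fin 2 → Fin I × Fin I) (b : Fin 2 → Fin H) :
    cellLayer (Bmove I H (a 0) (a 1) (b 0) (b 1)) = loopOf a b := by
  ext ⟨⟨i, j⟩, h⟩
  have h0 : finRotate 2 0 = 1 := rfl
  have h1 : finRotate 2 1 = 0 := rfl
  simp only [cellLayer, Bmove, loopOf, Fin.sum_univ_two, h0, h1, Prod.ext_iff, eq_comm, and_assoc]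
  split_ifs <;> norm_num

end ThreeWay

section Steps

variable {I H : ℕ} {u v : Fin I × Fin I × Fin H → ℤ}

theorem exists_B1_step (hu : ∀ p, 0 ≤ u p) (hv : ∀ p, 0 ≤ v p)
    (hstat : qiStat (sumLayers u) = qiStat (sumLayers v)) (hne : sumLayers u ≠ sumLayers v) :
    ∃ m ∈ B1qi I H, (∀ p, 0 ≤ u p + m p) ∧ layerTotals m = 0 ∧ qiStat (sumLayers m) = 0 ∧
      ∑ c, (sumLayers (u + m) c - sumLayers v c).natAbs
        < ∑ c, (sumLayers u c - sumLayers v c).natAbs := by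
  set d := sumLayers u - sumLayers v with hd
  obtain ⟨hrow, hcol, hdiag⟩ :=
    qiStat_eq_zero_iff.mp (show qiStat d = 0 by rw [hd, map_sub, hstat, sub_self])
  obtain ⟨r, hr3, a, b, s₀, hab, hs₀⟩ :=
    exists_isReducingLoop_offDiag hrow hcol hdiag (sub_ne_zero.mpr hne)
  have hoff := hab.loopOf_apply_self hdiag hs₀
  have hlt := hab.sum_natAbs_add_lt
  obtain ⟨hr, ha, hb, hpos, -⟩ := hab
  have hlayer : ∀ s, ∃ h, 0 < u (a s, b (finRotate r s), h) := by
    intro s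
    have hvs : 0 ≤ ∑ h, v (a s, b (finRotate r s), h) := sum_nonneg fun h _ => hv _
    have hus : 0 < ∑ h, u (a s, b (finRotate r s), h) := hvs.trans_lt (sub_pos.mp (hpos s))
    obtain ⟨h, -, hh⟩ := (sum_pos_iff_of_nonneg fun h _ => hu _).mp hus
    exact ⟨h, hh⟩
  -- each row of the loop has a single `-1` entry; `ℓ` puts the row into a layer where `u` is
  -- positive at that entry
  choose g hg using hlayer
  obtain ⟨ℓ, hℓ⟩ : ∃ ℓ : Fin I → Fin H, ∀ s, ℓ (a s) = g s :=
    ⟨Function.extend a g fun _ => g s₀, ha.extend_apply g _⟩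
  have hloop := isLoopOn_loopOf hr ha hb
  refine ⟨liftRows ℓ (loopOf a b), ⟨loopOf a b, ℓ, hloop.isDf1Loop, ?_, hoff, rfl⟩, ?_,
    layerTotals_liftRows ℓ sum_loopOf_row, ?_, ?_⟩
  · interval_cases r
    exacts [Or.inl hloop, Or.inr hloop]
  · rintro ⟨i, j, h⟩
    simp only [liftRows]
    split_ifs with hh
    · subst hh
      by_cases hneg : loopOf a b (i, j) < 0
      · obtain ⟨s, rfl, rfl⟩ := exists_eq_of_loopOf_neg hr ha hb hneg
        have := hg s
        rw [hℓ, loopOf_apply_neg hr ha hb]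
        omega
      · linarith [hu (i, j, ℓ i)]
    · simpa using hu _
  · rw [sumLayers_liftRows, qiStat_eq_zero_iff]
    exact ⟨sum_loopOf_row, sum_loopOf_col, hoff⟩
  · simpa [sumLayers_liftRows, hd, add_sub_right_comm] using hlt

theorem exists_B2_step (hu : ∀ p, 0 ≤ u p) (hv : ∀ p, 0 ≤ v p)
    (hsum : sumLayers u = sumLayers v) (hlay : layerTotals u = layerTotals v) (hne : u ≠ v) :
    ∃ m ∈ B2 I H, (∀ p, 0 ≤ u p + m p) ∧ layerTotals m = 0 ∧ sumLayers m = 0 ∧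
      ∑ q, (cellLayer (u + m) q - cellLayer v q).natAbs
        < ∑ q, (cellLayer u q - cellLayer v q).natAbs := by
  set d := cellLayer u - cellLayer v with hd
  have hrow : ∀ c, ∑ h, d (c, h) = 0 := fun c => by
    simpa [hd, sum_sub_distrib, sumLayers_apply, sub_eq_zero] using congrFun hsum c
  have hcol : ∀ h, ∑ c, d (c, h) = 0 := fun h => by
    simpa [hd, sum_sub_distrib, layerTotals_apply, sub_eq_zero] using congrFun hlay h
  have hd0 : d ≠ 0 := fun h0 => hne (funext fun ⟨i, j, h⟩ => by
    simpa [hd, cellLayer, sub_eq_zero] using congrFun h0 ((i, j), h))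
  obtain ⟨a, b, hab⟩ := exists_isReducingLoop_two hrow hcol hd0
  have hm := cellLayer_Bmove a b
  refine ⟨Bmove I H (a 0) (a 1) (b 0) (b 1), ⟨_, _, _, _, hab.injective_fst.ne zero_ne_one,
    hab.injective_snd.ne zero_ne_one, Or.inl rfl⟩, fun ⟨i, j, h⟩ => ?_, ?_, ?_, ?_⟩
  · have := hab.add_loopOf_nonneg hd (fun _ => hu _) (fun _ => hv _) ((i, j), h)
    rw [← hm] at this
    exact this
  · ext h
    simp [layerTotals_apply, hm, sum_loopOf_col]
  · ext c
    simp [sumLayers_apply, hm, sum_loopOf_row]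
  · have : cellLayer (u + Bmove I H (a 0) (a 1) (b 0) (b 1)) = cellLayer u + loopOf a b := by
      rw [← hm]; rfl
    simpa [this, hd, add_sub_right_comm] using hab.sum_natAbs_add_lt

end Steps

theorem markov_basis_M0_quasi_independence_general
    (I H : ℕ)
    (u v : Fin I × Fin I × Fin H → ℤ)
    (hu : ∀ p, 0 ≤ u p) (hv : ∀ p, 0 ≤ v p)
    (hlayer : ∀ h : Fin H, (∑ i, ∑ j, u (i, j, h)) = ∑ i, ∑ j, v (i, j, h))
    (hrow : ∀ i : Fin I, (∑ j, ∑ h, u (i, j, h)) = ∑ j, ∑ h, v (i, j, h))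
    (hcol : ∀ j : Fin I, (∑ i, ∑ h, u (i, j, h)) = ∑ i, ∑ h, v (i, j, h))
    (hdiag : ∀ i : Fin I, (∑ h, u (i, i, h)) = ∑ h, v (i, i, h)) :
    MarkovConnects (B1qi I H ∪ B2 I H) u v := by
  refine markovConnects_of_descent (wellFounded_lt.prod_lex wellFounded_lt)
    (fun w => (∑ c, (sumLayers w c - sumLayers v c).natAbs,
      ∑ q, (cellLayer w q - cellLayer v q).natAbs))
    (fun w => layerTotals w = layerTotals v ∧ qiStat (sumLayers w) = qiStat (sumLayers v))
    (fun w hw ⟨hlay, hstat⟩ hne => ?_) u hu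
    ⟨funext hlayer, Prod.ext (funext hrow) (Prod.ext (funext hcol) (funext hdiag))⟩
  by_cases hsum : sumLayers w = sumLayers v
  · obtain ⟨m, hm, hnn, hmlay, hmsum, hlt⟩ := exists_B2_step hw hv hsum hlay hne
    have hsum' : sumLayers (w + m) = sumLayers w := by rw [map_add, hmsum, add_zero]
    refine ⟨m, .inr hm, hnn, ⟨by rw [map_add, hmlay, add_zero, hlay], by rw [hsum', hstat]⟩, ?_⟩
    rw [hsum']
    exact Prod.Lex.right _ hlt
  · obtain ⟨m, hm, hnn, hmlay, hmstat, hlt⟩ := exists_B1_step hw hv hstat hsum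
    exact ⟨m, .inl hm, hnn, ⟨by rw [map_add, hmlay, add_zero, hlay],
      by rw [map_add, map_add, hmstat, add_zero, hstat]⟩, Prod.Lex.left _ _ hlt⟩

/-- `ℳ₀ = 𝓑₁ ∪ 𝓑₂` is a Markov basis for the model `M₀` built on the quasi-independence
model: any two nonnegative integer `I × I × H` tables with equal layer totals and whose
layer-summed tables have equal row sums, equal column sums and equal diagonal entries are
connected through nonnegative tables by steps in `ℳ₀`. -/
theorem markov_basis_M0_quasi_independence
    (I H : ℕ) (hI : 2 ≤ I) (hH : 2 ≤ H)
    (u v : Fin I × Fin I × Fin H → ℤ)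
    (hu : ∀ p, 0 ≤ u p) (hv : ∀ p, 0 ≤ v p)
    (hlayer : ∀ h : Fin H, (∑ i, ∑ j, u (i, j, h)) = ∑ i, ∑ j, v (i, j, h))
    (hrow : ∀ i : Fin I, (∑ j, ∑ h, u (i, j, h)) = ∑ j, ∑ h, v (i, j, h))
    (hcol : ∀ j : Fin I, (∑ i, ∑ h, u (i, j, h)) = ∑ i, ∑ h, v (i, j, h))
    (hdiag : ∀ i : Fin I, (∑ h, u (i, i, h)) = ∑ h, v (i, i, h)) :
    MarkovConnects (B1qi I H ∪ B2 I H) u v :=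
  markov_basis_M0_quasi_independence_general I H u v hu hv hlayer hrow hcol hdiag
end

section
/- Let A^t be an integer matrix with K columns, and let Λ(A)^t be its (second) Lawrence lifting, the matrix with 2K columns given in block form by rows (A^t, 0), (0, A^t), and (I_K, I_K), where I_K is the K×K identity; equivalently, Ker_ℤ(Λ(A)^t) = {(u, −u) : u ∈ Ker_ℤ(A^t)}. Then the Graver basis of Λ(A)^t equals {(g, −g) : g ∈ 𝒢}, where 𝒢 is the Graver basis of A^t. -/
/-- `u` is conformal to `v` (written `u ⊑ v`): no sign cancellation and coordinatewise
smaller in absolute value. -/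
def ConformalTo {α : Type*} (u v : α → ℤ) : Prop :=
  ∀ k, 0 ≤ u k * v k ∧ |u k| ≤ |v k|

/-- The Graver basis of a kernel set `K`: the nonzero elements of `K` that are minimal
with respect to the conformal partial order `⊑`. -/
def GraverBasis {α : Type*} (K : Set (α → ℤ)) : Set (α → ℤ) :=
  {u | u ∈ K ∧ u ≠ 0 ∧ ∀ w ∈ K, w ≠ 0 → ConformalTo w u → w = u}

/-- The (second) Lawrence lifting `Λ(A)^t` of a matrix `A^t` with `K` columns: the matrix
with `2K` columns whose rows in block form are `(A^t, 0)`, `(0, A^t)` and `(I_K, I_K)`. -/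
def Lawrence (d K : ℕ) (A : Matrix (Fin d) (Fin K) ℤ) :
    Matrix ((Fin d ⊕ Fin d) ⊕ Fin K) (Fin K ⊕ Fin K) ℤ :=
  Matrix.of fun row col =>
    match row, col with
    | Sum.inl (Sum.inl r), Sum.inl k => A r k
    | Sum.inl (Sum.inl _), Sum.inr _ => 0
    | Sum.inl (Sum.inr _), Sum.inl _ => 0
    | Sum.inl (Sum.inr r), Sum.inr k => A r k
    | Sum.inr k', Sum.inl k => if k = k' then 1 else 0
    | Sum.inr k', Sum.inr k => if k = k' then 1 else 0

lemma lawrence_ker (d K : ℕ) (A : Matrix (Fin d) (Fin K) ℤ) (w : Fin K ⊕ Fin K → ℤ) :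
    (Lawrence d K A).mulVec w = 0 ↔
      ∃ u : Fin K → ℤ, A.mulVec u = 0 ∧ w = Sum.elim u (-u) := by
  constructor
  · intro h
    refine ⟨w ∘ Sum.inl, ?_, ?_⟩
    · funext r
      have := congrFun h (Sum.inl (Sum.inl r))
      simpa [Lawrence, Matrix.mulVec, dotProduct, Fintype.sum_sum_type] using this
    · funext j
      cases j with
      | inl k => simp
      | inr k =>
        have := congrFun h (Sum.inr k)
        simp [Lawrence, Matrix.mulVec, dotProduct, Fintype.sum_sum_type] at this
        simp only [Sum.elim_inr, Pi.neg_apply, Function.comp_apply]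
        linarith
  · rintro ⟨u, hu, rfl⟩
    funext i
    match i with
    | Sum.inl (Sum.inl r) =>
      have := congrFun hu r
      simpa [Lawrence, Matrix.mulVec, dotProduct, Fintype.sum_sum_type] using this
    | Sum.inl (Sum.inr r) =>
      have := congrFun hu r
      simp [Lawrence, Matrix.mulVec, dotProduct, Fintype.sum_sum_type,
        mul_neg, Finset.sum_neg_distrib] at this ⊢
      simpa using this
    | Sum.inr k =>
      simp [Lawrence, Matrix.mulVec, dotProduct, Fintype.sum_sum_type]

lemma elim_conf {K : ℕ} (v u : Fin K → ℤ) :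
    ConformalTo (Sum.elim v (-v)) (Sum.elim u (-u)) ↔ ConformalTo v u := by
  constructor
  · intro h k
    simpa using h (Sum.inl k)
  · intro h j
    cases j with
    | inl k => simpa using h k
    | inr k => simpa [mul_neg, neg_mul] using h k

lemma elim_ne {K : ℕ} (u : Fin K → ℤ) : Sum.elim u (-u) ≠ 0 ↔ u ≠ 0 := by
  constructor
  · intro h hu
    apply h
    funext j
    cases j <;> simp [hu]
  · intro h hw
    apply h
    funext k
    simpa using congrFun hw (Sum.inl k)

/-- The integer kernel of the Lawrence lifting is `{(u, -u) : u ∈ Ker_ℤ(A^t)}`, and the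
Graver basis of the Lawrence lifting `Λ(A)^t` is `{(g, -g) : g ∈ 𝒢}` where `𝒢` is the
Graver basis of `A^t`. -/
theorem graver_of_lawrence (d K : ℕ) (A : Matrix (Fin d) (Fin K) ℤ) :
    ({w | (Lawrence d K A).mulVec w = 0} =
      {w | ∃ u : Fin K → ℤ, A.mulVec u = 0 ∧ w = Sum.elim u (-u)}) ∧
    GraverBasis {w | (Lawrence d K A).mulVec w = 0} =
      {w | ∃ g ∈ GraverBasis {u : Fin K → ℤ | A.mulVec u = 0},
        w = Sum.elim g (-g)} := by
  constructor
  · ext w; exact lawrence_ker d K A w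
  · ext w
    simp only [GraverBasis, Set.mem_setOf_eq, lawrence_ker]
    constructor
    · rintro ⟨⟨u, hu, rfl⟩, hne, hmin⟩
      refine ⟨u, ⟨hu, (elim_ne u).1 hne, ?_⟩, rfl⟩
      intro v hv hvne hconf
      have := hmin (Sum.elim v (-v)) ⟨v, hv, rfl⟩ ((elim_ne v).2 hvne)
        ((elim_conf v u).2 hconf)
      funext k
      simpa using congrFun this (Sum.inl k)
    · rintro ⟨g, ⟨hg, hgne, hgmin⟩, rfl⟩
      refine ⟨⟨g, hg, rfl⟩, (elim_ne g).2 hgne, ?_⟩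
      rintro w ⟨v, hv, rfl⟩ hwne hconf
      have := hgmin v hv ((elim_ne v).1 hwne) ((elim_conf v g).1 hconf)
      subst this
      rfl
end

section
/- Let B^t be an integer matrix and let 𝒢 be a subset of Ker_ℤ(B^t) closed under negation such that every nonzero element w of Ker_ℤ(B^t) can be written as a finite sum w = g_1 + … + g_r with each g_s ∈ 𝒢 and each g_s conformal to w (i.e., g_s ⊑ w, so there is no sign cancellation among the summands). Then 𝒢 is a Markov basis for B^t: for any two nonnegative integer vectors f, g with B^t f = B^t g there is a finite sequence f = f_0, f_1, …, f_L = g with every f_s a nonnegative integer vector and every difference f_{s+1} − f_s an element of 𝒢. In particular, every Graver basis (together with the negatives of its elements) is a Markov basis. -/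
/-- Per-coordinate consequence of conformality: linear sign facts. -/
lemma conf_coord {u w : ℤ} (h1 : 0 ≤ u * w) (h2 : |u| ≤ |w|) :
    (0 ≤ w ∧ 0 ≤ u ∧ u ≤ w) ∨ (w ≤ 0 ∧ u ≤ 0 ∧ w ≤ u) := by
  rcases le_or_gt 0 w with hw | hw
  · left
    have h2' : -w ≤ u ∧ u ≤ w := abs_le.mp (by rwa [abs_of_nonneg hw] at h2)
    refine ⟨hw, ?_, h2'.2⟩
    rcases hw.lt_or_eq with h | h
    · nlinarith
    · omega
  · right
    have h2' : -(-w) ≤ u ∧ u ≤ -w := abs_le.mp (by rwa [abs_of_neg hw] at h2)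
    refine ⟨hw.le, ?_, by omega⟩
    nlinarith

lemma conf_refl {α : Type*} (w : α → ℤ) : ConformalTo w w :=
  fun k => ⟨mul_self_nonneg _, le_rfl⟩

lemma conf_trans {α : Type*} {a b c : α → ℤ}
    (h1 : ConformalTo a b) (h2 : ConformalTo b c) : ConformalTo a c := by
  intro k
  obtain ⟨p1, q1⟩ := h1 k
  obtain ⟨p2, q2⟩ := h2 k
  refine ⟨?_, q1.trans q2⟩
  rcases conf_coord p1 q1 with ⟨ha1, ha2, ha3⟩ | ⟨ha1, ha2, ha3⟩ <;>
    rcases conf_coord p2 q2 with ⟨hb1, hb2, hb3⟩ | ⟨hb1, hb2, hb3⟩ <;>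
    nlinarith

lemma conf_sub {α : Type*} {u w : α → ℤ} (h : ConformalTo u w) :
    ConformalTo (w - u) w := by
  intro k
  obtain ⟨p, q⟩ := h k
  simp only [Pi.sub_apply]
  rcases conf_coord p q with ⟨h1, h2, h3⟩ | ⟨h1, h2, h3⟩
  · refine ⟨by nlinarith, ?_⟩
    rw [abs_of_nonneg (by omega), abs_of_nonneg h1]; omega
  · refine ⟨by nlinarith, ?_⟩
    rw [abs_of_nonpos (by omega), abs_of_nonpos h1]; omega

/-- Every nonzero element of `Kset` has a Graver element conformal to it. -/
lemma exists_graver_conformal {ι : Type*} [Fintype ι] (Kset : Set (ι → ℤ)) :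
    ∀ (n : ℕ) (w : ι → ℤ), (∑ k, (w k).natAbs) ≤ n → w ∈ Kset → w ≠ 0 →
      ∃ u ∈ GraverBasis Kset, ConformalTo u w := by
  intro n
  induction n using Nat.strong_induction_on with
  | _ n ih =>
    intro w hn hwK hw0
    by_cases hmin : ∀ v ∈ Kset, v ≠ 0 → ConformalTo v w → v = w
    · exact ⟨w, ⟨hwK, hw0, hmin⟩, conf_refl w⟩
    · push_neg at hmin
      obtain ⟨v, hvK, hv0, hvw, hne⟩ := hmin
      have hle : ∀ k, (v k).natAbs ≤ (w k).natAbs := by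
        intro k
        have := (hvw k).2
        simp only [Int.abs_eq_natAbs] at this
        exact_mod_cast this
      obtain ⟨k0, hk0⟩ := Function.ne_iff.mp hne
      have hlt : ∑ k, (v k).natAbs < ∑ k, (w k).natAbs := by
        apply Finset.sum_lt_sum (fun k _ => hle k) ⟨k0, Finset.mem_univ _, ?_⟩
        rcases conf_coord (hvw k0).1 (hvw k0).2 with ⟨h1, h2, h3⟩ | ⟨h1, h2, h3⟩ <;> omega
      obtain ⟨u, hu, huv⟩ :=
        ih (∑ k, (v k).natAbs) (lt_of_lt_of_le hlt hn) v le_rfl hvK hv0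
      exact ⟨u, hu, conf_trans huv hvw⟩

/-- Conformal decomposition into Graver elements. -/
lemma graver_decomp {ι : Type*} [Fintype ι] (Kset : Set (ι → ℤ))
    (hsub : ∀ a b, a ∈ Kset → b ∈ Kset → a - b ∈ Kset) :
    ∀ (n : ℕ) (w : ι → ℤ), (∑ k, (w k).natAbs) ≤ n → w ∈ Kset → w ≠ 0 →
      ∃ (r : ℕ) (gs : Fin r → ι → ℤ),
        (∀ s, gs s ∈ GraverBasis Kset ∧ ConformalTo (gs s) w) ∧ w = ∑ s, gs s := by
  intro n
  induction n using Nat.strong_induction_on with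
  | _ n ih =>
    intro w hn hwK hw0
    obtain ⟨u, huG, huw⟩ :=
      exists_graver_conformal Kset (∑ k, (w k).natAbs) w le_rfl hwK hw0
    by_cases hwu : w - u = 0
    · refine ⟨1, fun _ => u, fun s => ⟨huG, huw⟩, ?_⟩
      have : w = u := by
        funext k; have := congrFun hwu k; simp only [Pi.sub_apply, Pi.zero_apply] at this; omega
      simp [this]
    · have huK : u ∈ Kset := huG.1
      have hu0 : u ≠ 0 := huG.2.1
      have hwuK : w - u ∈ Kset := hsub w u hwK huK
      obtain ⟨k0, hk0⟩ := Function.ne_iff.mp hu0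
      have hle : ∀ k, (w k - u k).natAbs ≤ (w k).natAbs := by
        intro k
        rcases conf_coord (huw k).1 (huw k).2 with ⟨h1, h2, h3⟩ | ⟨h1, h2, h3⟩ <;> omega
      have hlt : ∑ k, ((w - u) k).natAbs < ∑ k, (w k).natAbs := by
        simp only [Pi.sub_apply]
        apply Finset.sum_lt_sum (fun k _ => hle k) ⟨k0, Finset.mem_univ _, ?_⟩
        have hk0' : u k0 ≠ 0 := by simpa using hk0
        rcases conf_coord (huw k0).1 (huw k0).2 with ⟨h1, h2, h3⟩ | ⟨h1, h2, h3⟩ <;> omega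
      obtain ⟨r, gs, hgs, hsum⟩ :=
        ih (∑ k, ((w - u) k).natAbs) (lt_of_lt_of_le hlt hn) (w - u) le_rfl hwuK hwu
      refine ⟨r + 1, Fin.cons u gs, ?_, ?_⟩
      · intro s
        refine Fin.cases ?_ ?_ s
        · exact ⟨huG, huw⟩
        · intro t
          simp only [Fin.cons_succ]
          exact ⟨(hgs t).1, conf_trans (conf_trans (hgs t).2 (conf_sub huw)) (conf_refl w)⟩
      · rw [Fin.sum_cons, ← hsum]; abel

/-- Path building from a conformal decomposition of `g - f`. -/
lemma markov_of_decomp {ι : Type*} [Fintype ι] (G : Set (ι → ℤ)) (f g : ι → ℤ)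
    (hf : ∀ k, 0 ≤ f k) (hg : ∀ k, 0 ≤ g k)
    (hdec : f = g ∨ ∃ (r : ℕ) (gs : Fin r → ι → ℤ),
      (∀ s, gs s ∈ G ∧ ConformalTo (gs s) (g - f)) ∧ g - f = ∑ s, gs s) :
    MarkovConnects G f g := by
  rcases hdec with h | ⟨r, gs, hgs, hsum⟩
  · subst h
    exact ⟨0, fun _ => f, rfl, rfl, fun _ p => hf p, fun s => s.elim0⟩
  · have hw : ∀ p, g p - f p = ∑ s, gs s p := by
      intro p
      have := congrFun hsum p
      simpa [Finset.sum_apply] using this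
    refine ⟨r, fun t k => f k + ∑ s : Fin r, if (s : ℕ) < (t : ℕ) then gs s k else 0,
      ?_, ?_, ?_, ?_⟩
    · funext k; simp
    · funext k
      show f k + _ = g k
      have : (∑ s : Fin r, if (s : ℕ) < ((Fin.last r : Fin (r+1)) : ℕ) then gs s k else 0)
          = ∑ s : Fin r, gs s k := by
        apply Finset.sum_congr rfl
        intro s _
        rw [if_pos]
        simpa using s.isLt
      rw [this]
      have := hw k
      omega
    · intro t p
      show 0 ≤ f p + _
      have hterm : ∀ s : Fin r,
          (0 ≤ g p - f p → 0 ≤ gs s p) ∧ (g p - f p ≤ 0 → gs s p ≤ 0) := by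
        intro s
        have h1 := ((hgs s).2 p).1
        have h2 := ((hgs s).2 p).2
        simp only [Pi.sub_apply] at h1 h2
        rcases conf_coord h1 h2 with ⟨a1, a2, a3⟩ | ⟨a1, a2, a3⟩ <;> constructor <;> intro <;> omega
      rcases le_or_gt (f p) (g p) with hp | hp
      · have : 0 ≤ ∑ s : Fin r, if (s : ℕ) < (t : ℕ) then gs s p else 0 := by
          apply Finset.sum_nonneg
          intro s _
          split_ifs
          · exact (hterm s).1 (by omega)
          · exact le_rfl
        have := hf p; omega
      · have hmono : ∑ s : Fin r, gs s p ≤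
            ∑ s : Fin r, if (s : ℕ) < (t : ℕ) then gs s p else 0 := by
          apply Finset.sum_le_sum
          intro s _
          split_ifs
          · exact le_rfl
          · exact (hterm s).2 (by omega)
        have h1 := hw p
        have h2 := hg p
        omega
    · intro s
      have key : (fun k => f k + ∑ t : Fin r, if (t : ℕ) < ((s.succ : Fin (r+1)) : ℕ) then gs t k else 0)
          - (fun k => f k + ∑ t : Fin r, if (t : ℕ) < ((s.castSucc : Fin (r+1)) : ℕ) then gs t k else 0)
          = gs s := by
        funext k
        simp only [Pi.sub_apply, Fin.val_succ, Fin.coe_castSucc]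
        rw [add_sub_add_left_eq_sub, ← Finset.sum_sub_distrib]
        have : ∀ t : Fin r, t ∈ Finset.univ →
            ((if (t : ℕ) < (s : ℕ) + 1 then gs t k else 0)
              - (if (t : ℕ) < (s : ℕ) then gs t k else 0))
            = if t = s then gs t k else 0 := by
          intro t _
          have hts : t = s ↔ (t : ℕ) = (s : ℕ) := Fin.ext_iff
          split_ifs <;> simp_all <;> omega
        rw [Finset.sum_congr rfl this, Finset.sum_ite_eq' Finset.univ s (fun t => gs t k)]
        simp
      rw [key]
      exact (hgs s).1

/-- If `𝒢 ⊆ Ker_ℤ(B^t)` is closed under negation and every nonzero kernel element is a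
finite sum of elements of `𝒢` each conformal to it, then `𝒢` is a Markov basis for `B^t`.
In particular the Graver basis of `B^t` (with the negatives of its elements) is a Markov
basis for `B^t`. -/
theorem conformal_decomposition_markov (d K : ℕ) (B : Matrix (Fin d) (Fin K) ℤ)
    (G : Set (Fin K → ℤ))
    (hGker : ∀ g ∈ G, B.mulVec g = 0)
    (hGneg : ∀ g ∈ G, -g ∈ G)
    (hGdecomp : ∀ w : Fin K → ℤ, B.mulVec w = 0 → w ≠ 0 →
      ∃ (r : ℕ) (gs : Fin r → Fin K → ℤ),
        (∀ s, gs s ∈ G ∧ ConformalTo (gs s) w) ∧ w = ∑ s, gs s) :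
    (∀ f g : Fin K → ℤ, (∀ k, 0 ≤ f k) → (∀ k, 0 ≤ g k) →
      B.mulVec f = B.mulVec g → MarkovConnects G f g) ∧
    (∀ f g : Fin K → ℤ, (∀ k, 0 ≤ f k) → (∀ k, 0 ≤ g k) →
      B.mulVec f = B.mulVec g →
        MarkovConnects
          (GraverBasis {w | B.mulVec w = 0} ∪ -(GraverBasis {w | B.mulVec w = 0}))
          f g) := by
  have hker : ∀ f g : Fin K → ℤ, B.mulVec f = B.mulVec g → B.mulVec (g - f) = 0 := by
    intro f g h
    rw [Matrix.mulVec_sub, h, sub_self]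
  constructor
  · intro f g hf hg hB
    apply markov_of_decomp G f g hf hg
    by_cases h0 : g - f = 0
    · left; funext k; have := congrFun h0 k; simp only [Pi.sub_apply, Pi.zero_apply] at this; omega
    · right; exact hGdecomp (g - f) (hker f g hB) h0
  · intro f g hf hg hB
    apply markov_of_decomp _ f g hf hg
    by_cases h0 : g - f = 0
    · left; funext k; have := congrFun h0 k; simp only [Pi.sub_apply, Pi.zero_apply] at this; omega
    · right
      obtain ⟨r, gs, hgs, hsum⟩ :=
        graver_decomp {w | B.mulVec w = 0}
          (fun a b ha hb => by
            simp only [Set.mem_setOf_eq] at *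
            rw [Matrix.mulVec_sub, ha, hb, sub_self])
          (∑ k, ((g - f) k).natAbs) (g - f) le_rfl (hker f g hB) h0
      exact ⟨r, gs, fun s => ⟨Set.mem_union_left _ (hgs s).1, (hgs s).2⟩, hsum⟩
end

section
/- For a 3×3 integer matrix m, the following are equivalent: (a) all row sums of m are zero, all column sums of m are zero, and all diagonal entries of m are zero (m is a move of the 3×3 quasi-independence model with fixed diagonal); (b) m(i,j) + m(j,i) = 0 for all i,j and all row sums of m are zero (m is a move of the 3×3 quasi-symmetry model). Moreover, every such m is an integer multiple of the table m₀ with rows (0, 1, −1), (−1, 0, 1), (1, −1, 0). In particular, for I = 3 the quasi-independence and quasi-symmetry models coincide. -/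
/-- The 3×3 table with rows (0, 1, −1), (−1, 0, 1), (1, −1, 0). -/
def m₀ : Fin 3 → Fin 3 → ℤ := ![![0, 1, -1], ![-1, 0, 1], ![1, -1, 0]]

/-- For a 3×3 integer table `m`, having zero row sums, zero column sums and zero diagonal
(a move of the 3×3 quasi-independence model with fixed diagonal) is equivalent to being
antisymmetric with zero row sums (a move of the 3×3 quasi-symmetry model); moreover every
such `m` is an integer multiple of `m₀`. In particular, for `I = 3` the
quasi-independence and quasi-symmetry models coincide. -/
theorem qi_eq_qs_three_by_three (m : Fin 3 → Fin 3 → ℤ) :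
    (((∀ i, (∑ j, m i j) = 0) ∧ (∀ j, (∑ i, m i j) = 0) ∧ (∀ i, m i i = 0)) ↔
      ((∀ i j, m i j + m j i = 0) ∧ ∀ i, (∑ j, m i j) = 0)) ∧
    (((∀ i, (∑ j, m i j) = 0) ∧ (∀ j, (∑ i, m i j) = 0) ∧ (∀ i, m i i = 0)) →
      ∃ c : ℤ, m = c • m₀) := by
  simp only [Fin.sum_univ_three]
  have key : ((∀ i, m i 0 + m i 1 + m i 2 = 0) ∧ (∀ j, m 0 j + m 1 j + m 2 j = 0) ∧
      (∀ i, m i i = 0)) ↔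
      (m 0 0 = 0 ∧ m 1 1 = 0 ∧ m 2 2 = 0 ∧ m 1 0 = -m 0 1 ∧ m 0 2 = -m 0 1 ∧
        m 2 0 = m 0 1 ∧ m 1 2 = m 0 1 ∧ m 2 1 = -m 0 1) := by
    constructor
    · rintro ⟨r, c, d⟩
      have r0 := r 0; have r1 := r 1; have r2 := r 2
      have c0 := c 0; have c1 := c 1; have c2 := c 2
      have d0 := d 0; have d1 := d 1; have d2 := d 2
      refine ⟨d0, d1, d2, ?_, ?_, ?_, ?_, ?_⟩ <;> omega
    · rintro ⟨h1, h2, h3, h4, h5, h6, h7, h8⟩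
      refine ⟨?_, ?_, ?_⟩ <;> intro i <;> fin_cases i <;> simp_all
  refine ⟨?_, ?_⟩
  · rw [key]
    constructor
    · rintro ⟨h1, h2, h3, h4, h5, h6, h7, h8⟩
      constructor
      · intro i j; fin_cases i <;> fin_cases j <;> simp_all
      · intro i; fin_cases i <;> simp_all
    · rintro ⟨a, r⟩
      have r0 := r 0; have r1 := r 1; have r2 := r 2
      have a00 := a 0 0; have a01 := a 0 1; have a02 := a 0 2
      have a11 := a 1 1; have a12 := a 1 2; have a22 := a 2 2
      refine ⟨?_, ?_, ?_, ?_, ?_, ?_, ?_, ?_⟩ <;> omega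
  · rw [key]
    rintro ⟨h1, h2, h3, h4, h5, h6, h7, h8⟩
    refine ⟨m 0 1, ?_⟩
    funext i j
    fin_cases i <;> fin_cases j <;>
      simp_all [m₀, Fin.isValue]
end

section
/- The set consisting of the two moves ±m₀, where m₀ is the 3×3 integer table with rows (0, 1, −1), (−1, 0, 1), (1, −1, 0), is a Markov basis for the 3×3 quasi-symmetry (equivalently, quasi-independence) model: for any two nonnegative integer 3×3 tables f and g having equal row sums, equal column sums, and equal diagonal entries, there is a finite sequence f = f_0, f_1, …, f_L = g in which every f_s is a nonnegative integer table and every difference f_{s+1} − f_s equals m₀ or −m₀. -/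
/-- The 3×3 move with rows (0, 1, −1), (−1, 0, 1), (1, −1, 0), as a function on cells. -/
def mZero : Fin 3 × Fin 3 → ℤ := fun p => ![![0, 1, -1], ![-1, 0, 1], ![1, -1, 0]] p.1 p.2

lemma markovConnects_symm {α : Type*} (M : Set (α → ℤ)) (hM : ∀ m ∈ M, -m ∈ M)
    {f g : α → ℤ} (h : MarkovConnects M f g) : MarkovConnects M g f := by
  obtain ⟨L, path, h0, hL, hnn, hstep⟩ := h
  refine ⟨L, fun s => path s.rev, ?_, ?_, fun s p => hnn _ p, ?_⟩
  · simp only [Fin.rev_zero, hL]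
  · simp only [Fin.rev_last, h0]
  · intro s
    have h1 : (s.succ : Fin (L+1)).rev = (s.rev).castSucc := by
      ext
      simp only [Fin.val_rev, Fin.val_succ, Fin.coe_castSucc]
      omega
    have h2 : (s.castSucc : Fin (L+1)).rev = (s.rev).succ := by
      ext
      simp only [Fin.val_rev, Fin.val_succ, Fin.coe_castSucc]
      omega
    show path (s.succ).rev - path (s.castSucc).rev ∈ M
    rw [h1, h2]
    have := hM _ (hstep s.rev)
    have heq : path (s.rev).castSucc - path (s.rev).succ
        = -(path (s.rev).succ - path (s.rev).castSucc) := by ring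
    rwa [heq]

lemma connect_add (f : Fin 3 × Fin 3 → ℤ) (hf : ∀ p, 0 ≤ f p) (n : ℕ)
    (hg : ∀ p, 0 ≤ f p + n * mZero p) :
    MarkovConnects ({mZero, -mZero} : Set (Fin 3 × Fin 3 → ℤ)) f
      (fun p => f p + n * mZero p) := by
  refine ⟨n, fun s p => f p + ((s : ℕ) : ℤ) * mZero p, ?_, ?_, ?_, ?_⟩
  · funext p; simp
  · funext p; simp [Fin.last]
  · intro s p
    show 0 ≤ f p + ((s : ℕ) : ℤ) * mZero p
    have hs0 : (0 : ℤ) ≤ ((s : ℕ) : ℤ) := by exact_mod_cast Nat.zero_le _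
    have hsn : ((s : ℕ) : ℤ) ≤ (n : ℤ) := by exact_mod_cast Nat.le_of_lt_succ s.isLt
    by_cases h : 0 ≤ mZero p
    · have : 0 ≤ ((s : ℕ) : ℤ) * mZero p := mul_nonneg hs0 h
      linarith [hf p]
    · push_neg at h
      have : (n : ℤ) * mZero p ≤ ((s : ℕ) : ℤ) * mZero p :=
        mul_le_mul_of_nonpos_right hsn (le_of_lt h)
      linarith [hg p]
  · intro s
    left
    funext p
    show (f p + ((s.succ : Fin (n+1)) : ℤ) * mZero p)
        - (f p + ((s.castSucc : Fin (n+1)) : ℤ) * mZero p) = mZero p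
    have h1 : (((s.succ : Fin (n+1)) : ℕ) : ℤ) = ((s : ℕ) : ℤ) + 1 := by
      simp [Fin.val_succ]
    have h2 : (((s.castSucc : Fin (n+1)) : ℕ) : ℤ) = ((s : ℕ) : ℤ) := by
      simp
    rw [h1, h2]
    ring

/-- The set `{m₀, -m₀}` is a Markov basis for the 3×3 quasi-symmetry (equivalently,
quasi-independence) model: any two nonnegative integer 3×3 tables with equal row sums,
equal column sums and equal diagonal entries are connected through nonnegative tables by
steps equal to `m₀` or `-m₀`. -/
theorem markov_basis_three_by_three
    (f g : Fin 3 × Fin 3 → ℤ)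
    (hf : ∀ p, 0 ≤ f p) (hg : ∀ p, 0 ≤ g p)
    (hrow : ∀ i, (∑ j, f (i, j)) = ∑ j, g (i, j))
    (hcol : ∀ j, (∑ i, f (i, j)) = ∑ i, g (i, j))
    (hdiag : ∀ i, f (i, i) = g (i, i)) :
    MarkovConnects ({mZero, -mZero} : Set (Fin 3 × Fin 3 → ℤ)) f g := by
  have hkey : ∀ p, g p = f p + (g (0, 1) - f (0, 1)) * mZero p := by
    have hr0 := hrow 0; have hr1 := hrow 1; have hr2 := hrow 2
    have hc0 := hcol 0; have hc1 := hcol 1; have hc2 := hcol 2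
    have hd0 := hdiag 0; have hd1 := hdiag 1; have hd2 := hdiag 2
    simp only [Fin.sum_univ_three] at hr0 hr1 hr2 hc0 hc1 hc2
    rintro ⟨i, j⟩
    fin_cases i <;> fin_cases j <;> simp [mZero, -Prod.mk_zero_zero, -Prod.mk_one_one] <;> linarith
  have hMsymm : ∀ m ∈ ({mZero, -mZero} : Set (Fin 3 × Fin 3 → ℤ)), -m ∈
      ({mZero, -mZero} : Set (Fin 3 × Fin 3 → ℤ)) := by
    rintro m (rfl | rfl)
    · right; rfl
    · left; simp
  rcases le_or_gt 0 (g (0, 1) - f (0, 1)) with hk0 | hk0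
  · obtain ⟨n, hn⟩ := Int.eq_ofNat_of_zero_le hk0
    have := connect_add f hf n (fun p => by rw [← hn, ← hkey p]; exact hg p)
    have hgeq : g = fun p => f p + (n : ℤ) * mZero p := by
      funext p; rw [hkey p, hn]
    rwa [← hgeq] at this
  · obtain ⟨n, hn⟩ := Int.eq_ofNat_of_zero_le (le_of_lt (neg_pos.mpr hk0))
    have hfeq : ∀ p, f p = g p + (n : ℤ) * mZero p := by
      intro p
      have h := hkey p
      rw [← hn]
      linarith [hkey p]
    have := connect_add g hg n (fun p => by rw [← hfeq p]; exact hf p)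
    have hfeq' : f = fun p => g p + (n : ℤ) * mZero p := funext hfeq
    rw [← hfeq'] at this
    exact markovConnects_symm _ hMsymm this
end

section
/- Let R = ℚ[p₁₁, p₁₂, p₁₃, p₂₁, p₂₂, p₂₃, p₃₁, p₃₂, p₃₃] and S = ℚ[μ, α₁, α₂, α₃, β₁, β₂, β₃, γ₁₂, γ₁₃, γ₂₃, γ₁₁, γ₂₂, γ₃₃], and let φ : R → S be the ℚ-algebra homomorphism of the 3×3 quasi-symmetry model, defined by φ(p_{ij}) = μ·α_i·β_j·γ_{ij}, where γ_{ij} denotes γ_{ji} when i > j. Then the kernel of φ is the principal ideal of R generated by the single binomial p₁₂p₂₃p₃₁ − p₁₃p₃₂p₂₁. -/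
/-!
A monomial map kills a polynomial exactly when the coefficients on each fibre of the exponent map
sum to zero, so its kernel is generated by the binomials `x^u - x^w` whose exponents have the same
image. For the 3×3 quasi-symmetry model, equal images force `u - w` to be an integer multiple of
the difference of the exponents of the two 3-cycles `p₁₂p₂₃p₃₁` and `p₁₃p₃₂p₂₁`. Writing
`u = m + k c₊` and `w = m + k c₋`, the binomial is `x^m (a^k - b^k)`, a multiple of `a - b`.
-/

/-- Parameters of the 3×3 quasi-symmetry model: an overall effect `μ`, row effects `αᵢ`,
column effects `βⱼ`, and symmetric interaction parameters `γᵢⱼ = γⱼᵢ` (the parameter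
`γᵢⱼ` is addressed through the ordered pair `(min i j, max i j)`). -/
inductive QSParam where
  | mu : QSParam
  | alpha : Fin 3 → QSParam
  | beta : Fin 3 → QSParam
  | gamma : Fin 3 → Fin 3 → QSParam

open MvPolynomial

/-- The monomial homomorphism of the 3×3 quasi-symmetry model, sending
`p i j ↦ μ · αᵢ · βⱼ · γᵢⱼ`, where `γᵢⱼ` denotes `γⱼᵢ` when `i > j`. -/
noncomputable def qsHom :
    MvPolynomial (Fin 3 × Fin 3) ℚ →ₐ[ℚ] MvPolynomial QSParam ℚ :=
  aeval fun c : Fin 3 × Fin 3 =>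
    X QSParam.mu * X (QSParam.alpha c.1) * X (QSParam.beta c.2) *
      X (QSParam.gamma (min c.1 c.2) (max c.1 c.2))

section MonomialMap

variable {R σ τ : Type*}

theorem aeval_monomial_one_monomial [CommSemiring R] (w : σ → τ →₀ ℕ) (u : σ →₀ ℕ) (c : R) :
    aeval (fun i => monomial (w i) (1 : R)) (monomial u c) =
      monomial (Finsupp.linearCombination ℕ w u) c := by
  simp only [aeval_monomial, monomial_pow, one_pow, Finsupp.linearCombination_apply,
    monomial_finsupp_sum_index, algebraMap_eq]

theorem monomial_add_smul_sub_mem_span [CommRing R] (m a b : σ →₀ ℕ) (k : ℕ) :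
    monomial (m + k • a) (1 : R) - monomial (m + k • b) 1 ∈
      Ideal.span {monomial a 1 - monomial b 1} := by
  have hpow (e : σ →₀ ℕ) : monomial (m + k • e) (1 : R) = monomial m 1 * monomial e 1 ^ k := by
    rw [monomial_pow, one_pow, monomial_mul, one_mul]
  rw [hpow, hpow, ← mul_sub]
  exact Ideal.mul_mem_left _ _ (Ideal.mem_span_singleton.2 (sub_dvd_pow_sub_pow _ _ k))

theorem ker_le_of_binomial_mem [CommRing R] {F : Type*}
    [FunLike F (MvPolynomial σ R) (MvPolynomial τ R)]
    [RingHomClass F (MvPolynomial σ R) (MvPolynomial τ R)] {φ : F} (B : (σ →₀ ℕ) → (τ →₀ ℕ))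
    (hφ : ∀ u c, φ (monomial u c) = monomial (B u) c) {I : Ideal (MvPolynomial σ R)}
    (hI : ∀ u w, B u = B w → monomial u 1 - monomial w 1 ∈ I) :
    RingHom.ker φ ≤ I := by
  -- `ψ` sends a monomial `x^v` to `x^u`, for a chosen `u` in the fibre `B⁻¹(B v)`
  let ψ := AddMonoidAlgebra.mapDomainLinearMap R R (Function.invFun B)
  have hψ : ∀ f, f - ψ (φ f) ∈ I := by
    intro f
    induction f using MvPolynomial.induction_on' with
    | monomial u c =>
      have hsec : B (Function.invFun B (B u)) = B u := Function.invFun_eq ⟨u, rfl⟩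
      have hψu : ψ (φ (monomial u c)) = monomial (Function.invFun B (B u)) c := by
        rw [hφ, ← single_eq_monomial, ← single_eq_monomial,
          AddMonoidAlgebra.mapDomainLinearMap_single]
      rw [hψu, ← mul_one c, ← C_mul_monomial, ← C_mul_monomial, ← mul_sub]
      exact I.mul_mem_left _ (hI _ _ hsec.symm)
    | add p q hp hq =>
      convert I.add_mem hp hq using 1
      rw [map_add, map_add]
      abel
  intro f hf
  simpa only [RingHom.mem_ker.1 hf, map_zero, sub_zero] using hψ f

end MonomialMap

section QuasiSymmetry

open QSParam
open Finsupp (single linearCombination)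

noncomputable def qsWeight (c : Fin 3 × Fin 3) : QSParam →₀ ℕ :=
  single mu 1 + single (alpha c.1) 1 + single (beta c.2) 1 +
    single (gamma (min c.1 c.2) (max c.1 c.2)) 1

theorem qsHom_eq_aeval : qsHom = aeval fun c => monomial (qsWeight c) (1 : ℚ) := by
  simp only [qsHom, qsWeight, X, monomial_mul, mul_one]

theorem qsHom_monomial (u : Fin 3 × Fin 3 →₀ ℕ) (c : ℚ) :
    qsHom (monomial u c) = monomial (linearCombination ℕ qsWeight u) c := by
  rw [qsHom_eq_aeval, aeval_monomial_one_monomial]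

theorem linearCombination_qsWeight_apply (u : Fin 3 × Fin 3 →₀ ℕ) (t : QSParam) :
    linearCombination ℕ qsWeight u t = ∑ c, u c * qsWeight c t := by
  rw [Finsupp.linearCombination_apply, Finsupp.sum_fintype _ _ (by simp),
    Finsupp.finsetSum_apply]
  simp

noncomputable def qsCyclePos : Fin 3 × Fin 3 →₀ ℕ :=
  single (0, 1) 1 + single (1, 2) 1 + single (2, 0) 1

noncomputable def qsCycleNeg : Fin 3 × Fin 3 →₀ ℕ :=
  single (0, 2) 1 + single (2, 1) 1 + single (1, 0) 1

theorem exists_eq_add_smul_qsCycle {u w : Fin 3 × Fin 3 →₀ ℕ}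
    (h : linearCombination ℕ qsWeight u = linearCombination ℕ qsWeight w)
    (hle : w (0, 1) ≤ u (0, 1)) :
    ∃ (m : Fin 3 × Fin 3 →₀ ℕ) (k : ℕ), u = m + k • qsCyclePos ∧ w = m + k • qsCycleNeg := by
  have e : ∀ t, ∑ c, u c * qsWeight c t = ∑ c, w c * qsWeight c t := fun t => by
    rw [← linearCombination_qsWeight_apply, ← linearCombination_qsWeight_apply, h]
  -- The `γᵢᵢ` fix the diagonal cells; the off-diagonal `γᵢⱼ` and the row sums `α₀`, `α₁`
  -- then force `u - w = k (c₊ - c₋)` with `k = u₀₁ - w₀₁`.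
  have e00 := e (gamma 0 0)
  have e11 := e (gamma 1 1)
  have e22 := e (gamma 2 2)
  have e01 := e (gamma 0 1)
  have e02 := e (gamma 0 2)
  have e12 := e (gamma 1 2)
  have a0 := e (alpha 0)
  have a1 := e (alpha 1)
  simp [Fintype.sum_prod_type, Fin.sum_univ_three, qsWeight] at e00 e11 e22 e01 e02 e12 a0 a1
  refine ⟨u - (u (0, 1) - w (0, 1)) • qsCyclePos, u (0, 1) - w (0, 1), ?_, ?_⟩ <;>
  · ext c
    simp only [qsCyclePos, qsCycleNeg, Finsupp.add_apply, Finsupp.tsub_apply, Finsupp.smul_apply,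
      Finsupp.single_apply]
    fin_cases c <;> simp <;> omega

theorem monomial_sub_monomial_mem_span_qsCycle {u w : Fin 3 × Fin 3 →₀ ℕ}
    (h : linearCombination ℕ qsWeight u = linearCombination ℕ qsWeight w) :
    monomial u (1 : ℚ) - monomial w 1 ∈
      Ideal.span {monomial qsCyclePos 1 - monomial qsCycleNeg 1} := by
  rcases le_total (w (0, 1)) (u (0, 1)) with hle | hle
  · obtain ⟨m, k, rfl, rfl⟩ := exists_eq_add_smul_qsCycle h hle
    exact monomial_add_smul_sub_mem_span m _ _ k
  · obtain ⟨m, k, rfl, rfl⟩ := exists_eq_add_smul_qsCycle h.symm hle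
    simpa only [neg_sub] using
      neg_mem (monomial_add_smul_sub_mem_span (R := ℚ) m qsCyclePos qsCycleNeg k)

theorem linearCombination_qsWeight_qsCyclePos :
    linearCombination ℕ qsWeight qsCyclePos = linearCombination ℕ qsWeight qsCycleNeg := by
  simp [qsCyclePos, qsCycleNeg, qsWeight]
  abel

theorem X_mul_X_mul_X_sub_eq_monomial_qsCycle :
    (X (0, 1) * X (1, 2) * X (2, 0) - X (0, 2) * X (2, 1) * X (1, 0) :
        MvPolynomial (Fin 3 × Fin 3) ℚ) =
      monomial qsCyclePos 1 - monomial qsCycleNeg 1 := by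
  simp only [X, monomial_mul, mul_one, qsCyclePos, qsCycleNeg]

end QuasiSymmetry

/-- The toric ideal of the 3×3 quasi-symmetry model, i.e. the kernel of the monomial
homomorphism `p_{ij} ↦ μ αᵢ βⱼ γᵢⱼ`, is the principal ideal generated by the single
binomial `p₁₂ p₂₃ p₃₁ − p₁₃ p₃₂ p₂₁` (written with 0-based indices). -/
theorem toric_ideal_qs_three_by_three :
    RingHom.ker qsHom =
      Ideal.span
        ({X (0, 1) * X (1, 2) * X (2, 0) - X (0, 2) * X (2, 1) * X (1, 0)} :
          Set (MvPolynomial (Fin 3 × Fin 3) ℚ)) := by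
  rw [X_mul_X_mul_X_sub_eq_monomial_qsCycle]
  refine le_antisymm (ker_le_of_binomial_mem _ qsHom_monomial
    fun _ _ h => monomial_sub_monomial_mem_span_qsCycle h) ?_
  rw [Ideal.span_le, Set.singleton_subset_iff, SetLike.mem_coe, RingHom.mem_ker, map_sub,
    qsHom_monomial, qsHom_monomial, linearCombination_qsWeight_qsCyclePos, sub_self]
end

section
/- Let u, v : {1,…,I}×{1,…,I}×{1,…,H} → ℕ be three-way tables of nonnegative integers satisfying: (i) Σ_{i,j} u(i,j,h) = Σ_{i,j} v(i,j,h) for every layer h; and (ii) Σ_h u(i,i,h) = Σ_h v(i,i,h) for every diagonal index i. Suppose u(i₁,i₁,h₁) > v(i₁,i₁,h₁) for some i₁ and some layer h₁. Then there exist a layer h₂ ≠ h₁ and a cell (i₃,j₃) ≠ (i₁,i₁) such that the move b, which is zero except for b(i₁,i₁,h₁) = −1, b(i₁,i₁,h₂) = +1, b(i₃,j₃,h₂) = −1, b(i₃,j₃,h₁) = +1, satisfies u + b ≥ 0 and ‖u + b − v‖₁ < ‖u − v‖₁, where ‖·‖₁ denotes the sum of the absolute values of all entries. -/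
/-- The type-2 move `b`: `-1` at `(i₁,i₁,h₁)`, `+1` at `(i₁,i₁,h₂)`, `-1` at `(i₃,j₃,h₂)`
and `+1` at `(i₃,j₃,h₁)`. -/
def BMove (I H : ℕ) (i₁ : Fin I) (h₁ h₂ : Fin H) (i₃ j₃ : Fin I) :
    Fin I × Fin I × Fin H → ℤ := fun p =>
  (if p = (i₁, i₁, h₁) then -1 else 0) + (if p = (i₁, i₁, h₂) then 1 else 0) +
    (if p = (i₃, j₃, h₂) then -1 else 0) + (if p = (i₃, j₃, h₁) then 1 else 0)

/-- Distance reduction on the diagonal: if `u` and `v` are nonnegative integer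
`I × I × H` tables with equal layer totals and equal layer-summed diagonal entries, and
`u(i₁,i₁,h₁) > v(i₁,i₁,h₁)`, then there are a layer `h₂ ≠ h₁` and a cell
`(i₃,j₃) ≠ (i₁,i₁)` such that the type-2 move `b` keeps `u + b` nonnegative and strictly
reduces the `ℓ₁` distance to `v`. -/
theorem distance_reducing_type2_move (I H : ℕ)
    (u v : Fin I × Fin I × Fin H → ℤ)
    (hu : ∀ p, 0 ≤ u p) (hv : ∀ p, 0 ≤ v p)
    (hlayer : ∀ h : Fin H, (∑ i, ∑ j, u (i, j, h)) = ∑ i, ∑ j, v (i, j, h))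
    (hdiag : ∀ i : Fin I, (∑ h, u (i, i, h)) = ∑ h, v (i, i, h))
    (i₁ : Fin I) (h₁ : Fin H) (hpos : v (i₁, i₁, h₁) < u (i₁, i₁, h₁)) :
    ∃ (h₂ : Fin H) (i₃ j₃ : Fin I), h₂ ≠ h₁ ∧ (i₃, j₃) ≠ (i₁, i₁) ∧
      (∀ p, 0 ≤ u p + BMove I H i₁ h₁ h₂ i₃ j₃ p) ∧
      (∑ p : Fin I × Fin I × Fin H, |u p + BMove I H i₁ h₁ h₂ i₃ j₃ p - v p|) <
        ∑ p : Fin I × Fin I × Fin H, |u p - v p| := by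
  -- Find a layer h₂ with u < v on the diagonal cell (i₁,i₁)
  obtain ⟨h₂, hh₂⟩ : ∃ h₂, u (i₁, i₁, h₂) < v (i₁, i₁, h₂) := by
    by_contra hc
    push_neg at hc
    have : ∑ h, v (i₁, i₁, h) < ∑ h, u (i₁, i₁, h) :=
      Finset.sum_lt_sum (fun h _ => hc h) ⟨h₁, Finset.mem_univ _, hpos⟩
    have := hdiag i₁
    omega
  have hne : h₂ ≠ h₁ := by
    rintro rfl; omega
  -- Find a cell (i₃,j₃) with u > v in layer h₂
  obtain ⟨i₃, j₃, h3⟩ : ∃ i₃ j₃, v (i₃, j₃, h₂) < u (i₃, j₃, h₂) := by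
    by_contra hc
    push_neg at hc
    have : ∑ i, ∑ j, u (i, j, h₂) < ∑ i, ∑ j, v (i, j, h₂) := by
      apply Finset.sum_lt_sum
      · exact fun i _ => Finset.sum_le_sum (fun j _ => hc i j)
      · exact ⟨i₁, Finset.mem_univ _,
          Finset.sum_lt_sum (fun j _ => hc i₁ j) ⟨i₁, Finset.mem_univ _, hh₂⟩⟩
    have := hlayer h₂
    omega
  have hcell : (i₃, j₃) ≠ (i₁, i₁) := by
    intro h
    rw [Prod.mk.injEq] at h
    rw [h.1, h.2] at h3
    omega
  have hcell' : ¬(i₃ = i₁ ∧ j₃ = i₁) := by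
    intro h; exact hcell (by rw [h.1, h.2])
  set P1 : Fin I × Fin I × Fin H := (i₁, i₁, h₁) with hP1
  set P2 : Fin I × Fin I × Fin H := (i₁, i₁, h₂) with hP2
  set P3 : Fin I × Fin I × Fin H := (i₃, j₃, h₂) with hP3
  set P4 : Fin I × Fin I × Fin H := (i₃, j₃, h₁) with hP4
  have d12 : P1 ≠ P2 := fun h => hne (congrArg (·.2.2) h).symm
  have d13 : P1 ≠ P3 := fun h => hcell' ⟨(congrArg (·.1) h).symm, (congrArg (·.2.1) h).symm⟩
  have d14 : P1 ≠ P4 := fun h => hcell' ⟨(congrArg (·.1) h).symm, (congrArg (·.2.1) h).symm⟩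
  have d23 : P2 ≠ P3 := fun h => hcell' ⟨(congrArg (·.1) h).symm, (congrArg (·.2.1) h).symm⟩
  have d24 : P2 ≠ P4 := fun h => hcell' ⟨(congrArg (·.1) h).symm, (congrArg (·.2.1) h).symm⟩
  have d34 : P3 ≠ P4 := fun h => hne (congrArg (·.2.2) h)
  have bval : ∀ p, BMove I H i₁ h₁ h₂ i₃ j₃ p =
      (if p = P1 then -1 else 0) + (if p = P2 then 1 else 0) +
      (if p = P3 then -1 else 0) + (if p = P4 then 1 else 0) := fun p => rfl
  refine ⟨h₂, i₃, j₃, hne, hcell, ?_, ?_⟩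
  · -- Nonnegativity
    intro p
    rw [bval]
    have h1 := hu p
    have h2 := hv p
    by_cases e1 : p = P1
    · subst e1; simp [d12, d13, d14]; omega
    by_cases e3 : p = P3
    · subst e3; simp [d13, d23, d34]
      split_ifs <;> omega
    split_ifs <;> omega
  · -- Distance reduction
    have key : ∀ p, p ∉ ({P1, P2, P3, P4} : Finset (Fin I × Fin I × Fin H)) →
        BMove I H i₁ h₁ h₂ i₃ j₃ p = 0 := by
      intro p hp
      simp [Finset.mem_insert] at hp
      rw [bval]
      simp [hp.1, hp.2.1, hp.2.2.1, hp.2.2.2]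
    have split : (∑ p : Fin I × Fin I × Fin H, |u p + BMove I H i₁ h₁ h₂ i₃ j₃ p - v p|)
        - (∑ p : Fin I × Fin I × Fin H, |u p - v p|)
        = ∑ p ∈ ({P1, P2, P3, P4} : Finset (Fin I × Fin I × Fin H)),
            (|u p + BMove I H i₁ h₁ h₂ i₃ j₃ p - v p| - |u p - v p|) := by
      rw [← Finset.sum_sub_distrib]
      refine (Finset.sum_subset (Finset.subset_univ _) ?_).symm
      intro p _ hp
      rw [key p hp]
      ring_nf
    have sum4 : ∑ p ∈ ({P1, P2, P3, P4} : Finset (Fin I × Fin I × Fin H)),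
        (|u p + BMove I H i₁ h₁ h₂ i₃ j₃ p - v p| - |u p - v p|) < 0 := by
      rw [Finset.sum_insert (by simp [d12, d13, d14]),
        Finset.sum_insert (by simp [d23, d24]),
        Finset.sum_insert (by simp [d34]), Finset.sum_singleton]
      have e1 : BMove I H i₁ h₁ h₂ i₃ j₃ P1 = -1 := by rw [bval]; simp [d12, d13, d14]
      have e2 : BMove I H i₁ h₁ h₂ i₃ j₃ P2 = 1 := by
        rw [bval]; simp [d12.symm, d23, d24]
      have e3 : BMove I H i₁ h₁ h₂ i₃ j₃ P3 = -1 := by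
        rw [bval]; simp [d13.symm, d23.symm, d34]
      have e4 : BMove I H i₁ h₁ h₂ i₃ j₃ P4 = 1 := by
        rw [bval]; simp [d14.symm, d24.symm, d34.symm]
      rw [e1, e2, e3, e4]
      have a1 : |u P1 + -1 - v P1| - |u P1 - v P1| = -1 := by
        rw [abs_of_nonneg (by omega), abs_of_nonneg (by omega)]; ring
      have a2 : |u P2 + 1 - v P2| - |u P2 - v P2| = -1 := by
        rw [abs_of_nonpos (by omega), abs_of_nonpos (by omega)]; ring
      have a3 : |u P3 + -1 - v P3| - |u P3 - v P3| = -1 := by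
        rw [abs_of_nonneg (by omega), abs_of_nonneg (by omega)]; ring
      have a4 : |u P4 + 1 - v P4| - |u P4 - v P4| ≤ 1 := by
        have h := abs_add_le (u P4 - v P4) 1
        have : u P4 + 1 - v P4 = (u P4 - v P4) + 1 := by ring
        rw [this]
        simp at h ⊢
        linarith
      linarith
    omega
end
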